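/- arXiv:1707.06139 — 2 statements merged into one kernel-verified Lean document; each statement's English description precedes it below -/
import Mathlib

section
/- Let a : ℕ → ℝ satisfy a n > 0 for all n ≥ 1, and let T n = √(a 1 + √(a 2 + ⋯ + √(a n))) denote the n-th approximant of the continued square root. If the series ∑_{n=1}^∞ 2^(-n) * (a n) * ((a 1)*(a 2)*⋯*(a n))^(-1/2) converges, then the sequence (T n) converges to a finite limit. -/
/-!
The approximants increase with `n`. Peeling off one radical at a time with
`√(c + y) - √(c + x) ≤ (y - x) / (2 √c)` shows
`T (n + 1) - T n ≤ √(a (n + 1)) / (2 ^ n √(a 1 ⋯ a n))`, which is twice the `(n + 1)`-st term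
of the given series. So the increments of `T` are summable and `T` is a Cauchy sequence.
-/

open Filter Real Finset

/-- Backward-recurrence approximant of the continued square root:
`csqrtAppr a k n = √(a k + √(a (k+1) + ⋯ + √(a n)))`, with `csqrtAppr a k n = 0` for `k > n`. -/
noncomputable def csqrtAppr (a : ℕ → ℝ) (k n : ℕ) : ℝ :=
  if h : k > n then 0 else Real.sqrt (a k + csqrtAppr a (k + 1) n)
termination_by n + 1 - k
decreasing_by omega

theorem sqrt_sub_sqrt_le_div {u v w : ℝ} (hw : 0 < w) (hwv : w ≤ v) (hvu : v ≤ u) :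
    √u - √v ≤ (u - v) / (2 * √w) := by
  have hsw : √w ≤ √v := sqrt_le_sqrt hwv
  have hsv : √v ≤ √u := sqrt_le_sqrt hvu
  rw [le_div_iff₀ (by positivity)]
  calc (√u - √v) * (2 * √w) ≤ (√u - √v) * (√u + √v) :=
        mul_le_mul_of_nonneg_left (by linarith) (by linarith)
    _ = √u * √u - √v * √v := by ring
    _ = u - v := by rw [mul_self_sqrt (by linarith), mul_self_sqrt (by linarith)]

section csqrtAppr

variable (a : ℕ → ℝ)

theorem csqrtAppr_of_lt {k n : ℕ} (h : n < k) : csqrtAppr a k n = 0 := by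
  rw [csqrtAppr, dif_pos h]

theorem csqrtAppr_of_le {k n : ℕ} (h : k ≤ n) :
    csqrtAppr a k n = √(a k + csqrtAppr a (k + 1) n) := by
  rw [csqrtAppr, dif_neg (not_lt.2 h)]

theorem csqrtAppr_nonneg (k n : ℕ) : 0 ≤ csqrtAppr a k n := by
  rw [csqrtAppr]
  split
  · exact le_rfl
  · exact sqrt_nonneg _

theorem csqrtAppr_le_succ (k n : ℕ) : csqrtAppr a k n ≤ csqrtAppr a k (n + 1) := by
  rcases lt_or_ge n k with h | h
  · rw [csqrtAppr_of_lt a h]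
    exact csqrtAppr_nonneg a k (n + 1)
  · rw [csqrtAppr_of_le a h, csqrtAppr_of_le a (n := n + 1) (by omega)]
    exact sqrt_le_sqrt (by linarith [csqrtAppr_le_succ (k + 1) n])
termination_by n + 1 - k

theorem csqrtAppr_succ_sub_le {k n : ℕ} (hkn : k ≤ n + 1) (ha : ∀ i ∈ Icc k n, 0 < a i) :
    csqrtAppr a k (n + 1) - csqrtAppr a k n ≤
      √(a (n + 1)) / (2 ^ (n + 1 - k) * √(∏ i ∈ Icc k n, a i)) := by
  rcases hkn.lt_or_eq with hkn | rfl
  · have hak : 0 < a k := ha k (mem_Icc.2 ⟨le_rfl, by omega⟩)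
    have ih := csqrtAppr_succ_sub_le (k := k + 1) (n := n) hkn
      fun i hi => ha i (Icc_subset_Icc_left k.le_succ hi)
    have hsqrt := sqrt_sub_sqrt_le_div (u := a k + csqrtAppr a (k + 1) (n + 1))
      (v := a k + csqrtAppr a (k + 1) n) hak (by linarith [csqrtAppr_nonneg a (k + 1) n])
      (by linarith [csqrtAppr_le_succ a (k + 1) n])
    have hprod : ∏ i ∈ Icc k n, a i = a k * ∏ i ∈ Icc (k + 1) n, a i := by
      rw [← insert_Icc_add_one_left_eq_Icc (by omega : k ≤ n), prod_insert (by simp)]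
    have hpow : n + 1 - k = n + 1 - (k + 1) + 1 := by omega
    rw [csqrtAppr_of_le a (n := n + 1) (by omega), csqrtAppr_of_le a (by omega : k ≤ n)]
    calc _ ≤ _ := hsqrt
      _ ≤ √(a (n + 1)) / (2 ^ (n + 1 - (k + 1)) * √(∏ i ∈ Icc (k + 1) n, a i))
            / (2 * √(a k)) := by
          gcongr
          linarith
      _ = _ := by
          rw [hprod, sqrt_mul hak.le, hpow, pow_succ, div_div]
          ring
  · rw [csqrtAppr_of_lt a (by omega : n < n + 1), csqrtAppr_of_le a le_rfl,
      csqrtAppr_of_lt a (by omega : n + 1 < n + 2)]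
    simp
termination_by n + 1 - k

end csqrtAppr

theorem two_mul_summand_eq_sqrt_div {a : ℕ → ℝ} {n : ℕ} (ha : ∀ i ∈ Icc 1 (n + 1), 0 < a i) :
    2 * ((2 : ℝ) ^ (-((n + 1 : ℕ) : ℝ)) * a (n + 1) *
        (∏ i ∈ Icc 1 (n + 1), a i) ^ (-(1 : ℝ) / 2)) =
      √(a (n + 1)) / (2 ^ n * √(∏ i ∈ Icc 1 n, a i)) := by
  have hP : 0 < ∏ i ∈ Icc 1 n, a i :=
    prod_pos fun i hi => ha i (Icc_subset_Icc_right n.le_succ hi)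
  have han : 0 < a (n + 1) := ha (n + 1) (by simp)
  rw [prod_Icc_succ_top (by omega), show -(1 : ℝ) / 2 = -(1 / 2) by norm_num,
    rpow_neg (by positivity : (0 : ℝ) ≤ (∏ i ∈ Icc 1 n, a i) * a (n + 1)), ← sqrt_eq_rpow,
    sqrt_mul hP.le, rpow_neg zero_le_two, rpow_natCast, pow_succ]
  field_simp
  linear_combination -sq_sqrt han.le

/-- Problem 163 of Pólya and Szegő (1925): if `∑ 2^(-n) * a n * (a 1 ⋯ a n)^(-1/2)`
converges, then the continued square root of the positive terms `a n` converges. -/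
theorem continued_sqrt_converges_of_summable (a : ℕ → ℝ)
    (ha : ∀ n, 1 ≤ n → 0 < a n)
    (hsum : Summable fun n : ℕ =>
      (2 : ℝ) ^ (-(n : ℝ)) * a n * (∏ i ∈ Finset.Icc 1 n, a i) ^ (-(1 : ℝ) / 2)) :
    ∃ L : ℝ, Tendsto (fun n => csqrtAppr a 1 n) atTop (nhds L) := by
  have hpos : ∀ n, ∀ i ∈ Icc 1 n, 0 < a i := fun _ i hi => ha i (mem_Icc.1 hi).1
  have hbound : Summable fun n : ℕ => √(a (n + 1)) / (2 ^ n * √(∏ i ∈ Icc 1 n, a i)) :=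
    (((summable_nat_add_iff 1).2 hsum).mul_left 2).congr fun _ =>
      two_mul_summand_eq_sqrt_div (hpos _)
  have hstep : ∀ n, dist (csqrtAppr a 1 n) (csqrtAppr a 1 (n + 1)) ≤
      √(a (n + 1)) / (2 ^ n * √(∏ i ∈ Icc 1 n, a i)) := fun n => by
    rw [dist_comm, Real.dist_eq, abs_of_nonneg (sub_nonneg.2 (csqrtAppr_le_succ a 1 n))]
    exact csqrtAppr_succ_sub_le a (by omega) (hpos n)
  exact cauchySeq_tendsto_of_complete <|
    cauchySeq_of_summable_dist <| .of_nonneg_of_le (fun _ => dist_nonneg) hstep hbound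
end

section
/- Define, for each n ≥ 1, the finite nested radical s n = √(6 + 2·√(7 + 3·√(8 + ⋯))) truncated after n levels; formally s n = F n 1 where F n k = 0 for k > n and F n k = √((k+5) + (k+1) * F n (k+1)) for k ≤ n (real square roots). Then the sequence (s n) converges and its limit equals 4. -/
open Filter Real

/-- Truncated Ramanujan nested radical: `ramAppr2 n k = √((k+5) + (k+1)·ramAppr2 n (k+1))`
for `k ≤ n`, and `0` for `k > n`; real square roots. -/
noncomputable def ramAppr2 (n k : ℕ) : ℝ :=
  if h : k > n then 0 else Real.sqrt ((k + 5) + (k + 1) * ramAppr2 n (k + 1))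
termination_by n + 1 - k
decreasing_by omega

lemma ram_nonneg (n k : ℕ) : 0 ≤ ramAppr2 n k := by
  rw [ramAppr2]
  split
  · exact le_refl 0
  · exact Real.sqrt_nonneg _

lemma ram_upper (n k : ℕ) : ramAppr2 n k ≤ (k : ℝ) + 3 := by
  rw [ramAppr2]
  split
  · positivity
  · have ih := ram_upper n (k + 1)
    push_cast at ih
    have h0 := ram_nonneg n (k + 1)
    have h1 : ((k : ℝ) + 5) + ((k : ℝ) + 1) * ramAppr2 n (k + 1) ≤ ((k : ℝ) + 3) ^ 2 := by
      nlinarith [Nat.cast_nonneg (α := ℝ) k]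
    calc Real.sqrt ((k + 5) + (k + 1) * ramAppr2 n (k + 1))
        ≤ Real.sqrt (((k : ℝ) + 3) ^ 2) := Real.sqrt_le_sqrt h1
      _ = (k : ℝ) + 3 := by rw [Real.sqrt_sq (by positivity)]
termination_by n + 1 - k
decreasing_by omega

lemma ram_lower (n k : ℕ) (hk : k ≤ n + 1) :
    ((k : ℝ) + 3) - ((k : ℝ) + 1) * ((k : ℝ) + 2) * (((n : ℝ) + 4) / (((n : ℝ) + 2) * ((n : ℝ) + 3)))
      ≤ ramAppr2 n k := by
  have hEpos : (0 : ℝ) < ((n : ℝ) + 4) / (((n : ℝ) + 2) * ((n : ℝ) + 3)) := by positivity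
  set E : ℝ := ((n : ℝ) + 4) / (((n : ℝ) + 2) * ((n : ℝ) + 3)) with hE
  rw [ramAppr2]
  split
  · -- k = n + 1
    have hkn : k = n + 1 := by omega
    subst hkn
    have : ((n : ℝ) + 1 + 1) * ((n : ℝ) + 1 + 2) * E = (n : ℝ) + 4 := by
      rw [hE]; field_simp; ring
    push_cast
    linarith
  · -- k ≤ n
    rename_i hkle
    have hkn : k ≤ n := by omega
    have hknR : (k : ℝ) ≤ (n : ℝ) := by exact_mod_cast hkn
    have ih := ram_lower n (k + 1) (by omega)
    rw [← hE] at ih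
    push_cast at ih
    have hX0 := ram_nonneg n (k + 1)
    set X : ℝ := ramAppr2 n (k + 1)
    have key : ((k : ℝ) + 1) * ((k : ℝ) + 2) * E ≤ (k : ℝ) + 3 := by
      rw [hE, ← mul_div_assoc, div_le_iff₀ (by positivity)]
      have hk0 : (0 : ℝ) ≤ (k : ℝ) := Nat.cast_nonneg k
      nlinarith [mul_nonneg (sub_nonneg.2 hknR) hk0,
        mul_nonneg (mul_nonneg (sub_nonneg.2 hknR) hk0) hk0,
        mul_nonneg hk0 hk0, sq_nonneg ((n:ℝ)-(k:ℝ))]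
    by_cases hneg : ((k : ℝ) + 3) - ((k : ℝ) + 1) * ((k : ℝ) + 2) * E ≤ 0
    · exact hneg.trans (Real.sqrt_nonneg _)
    push_neg at hneg
    rw [← Real.sqrt_sq hneg.le]
    apply Real.sqrt_le_sqrt
    have hk0 : (0 : ℝ) ≤ (k : ℝ) := Nat.cast_nonneg k
    nlinarith [mul_le_mul_of_nonneg_left ih (show (0:ℝ) ≤ (k:ℝ)+1 by linarith),
      mul_pos (mul_pos (show (0:ℝ) < (k:ℝ)+1 by linarith) (show (0:ℝ) < (k:ℝ)+2 by linarith)) hEpos]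
termination_by n + 1 - k
decreasing_by omega

/-- Ramanujan (1911): `4 = √(6 + 2√(7 + 3√(8 + ⋯)))`, as the limit of the
truncated nested radicals. -/
theorem ramanujan_nested_radical_four :
    Tendsto (fun n => ramAppr2 n 1) atTop (nhds 4) := by
  have hupper : ∀ n : ℕ, ramAppr2 n 1 ≤ 4 := by
    intro n
    have := ram_upper n 1
    norm_num at this
    exact this
  have hlower : ∀ n : ℕ, 4 - 12 / ((n : ℝ) + 2) ≤ ramAppr2 n 1 := by
    intro n
    have h := ram_lower n 1 (by omega)
    norm_num at h
    have hbd : 2 * 3 * (((n : ℝ) + 4) / (((n : ℝ) + 2) * ((n : ℝ) + 3))) ≤ 12 / ((n : ℝ) + 2) := by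
      rw [← mul_div_assoc, div_le_div_iff₀ (by positivity) (by positivity)]
      nlinarith [Nat.cast_nonneg (α := ℝ) n]
    -- h : 4 - 2*3*E ≤ ramAppr2 n 1 in some normal form; handle via nlinarith/linarith
    nlinarith [h, hbd]
  have htend : Tendsto (fun n : ℕ => 4 - 12 / ((n : ℝ) + 2)) atTop (nhds 4) := by
    have h1 : Tendsto (fun n : ℕ => ((n : ℝ) + 2)) atTop atTop :=
      tendsto_atTop_add_const_right atTop 2 tendsto_natCast_atTop_atTop
    have h2 : Tendsto (fun n : ℕ => (12 : ℝ) / ((n : ℝ) + 2)) atTop (nhds 0) :=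
      Tendsto.div_atTop tendsto_const_nhds h1
    have : Tendsto (fun n : ℕ => (4:ℝ) - 12 / ((n : ℝ) + 2)) atTop (nhds (4 - 0)) :=
      Tendsto.sub tendsto_const_nhds h2
    simpa using this
  exact tendsto_of_tendsto_of_tendsto_of_le_of_le htend tendsto_const_nhds hlower
    (fun n => hupper n)
end
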